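/- arXiv:1812.06623 — 7 statements merged into one kernel-verified Lean document; each statement's English description precedes it below -/
import Mathlib

section
/- Let G be a group and let t_1, …, t_m be elements of G satisfying the chain relations. Then for every k with 1 ≤ k ≤ m−1, the following identity holds in G: (t_1 t_2 ⋯ t_m)^{k+1} = (t_1 t_2 ⋯ t_k)^{k+1} · (t_{k+1} t_k ⋯ t_1) · (t_{k+2} t_{k+1} ⋯ t_2) ⋯ (t_m t_{m−1} ⋯ t_{m−k}), where each of the m−k trailing factors is the descending product t_j t_{j−1} ⋯ t_{j−k} for j = k+1, k+2, …, m. -/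
namespace ChainPowerAux

variable {G : Type*} [Group G]

/-- ascending product `t 1 * ⋯ * t n`. -/
def P (t : ℕ → G) (n : ℕ) : G := ((List.range n).map (fun i => t (i + 1))).prod

/-- descending product `t a * t (a-1) * ⋯ * t (a-r+1)` of length `r`. -/
def desc (t : ℕ → G) (a r : ℕ) : G := ((List.range r).map (fun i => t (a - i))).prod

lemma P_zero (t : ℕ → G) : P t 0 = 1 := by simp [P]

lemma P_succ (t : ℕ → G) (n : ℕ) : P t (n + 1) = P t n * t (n + 1) := by
  simp [P, List.range_succ]

lemma desc_zero (t : ℕ → G) (a : ℕ) : desc t a 0 = 1 := by simp [desc]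

lemma desc_one (t : ℕ → G) (a : ℕ) : desc t a 1 = t a := by
  simp [desc, List.range_succ]

lemma desc_succ_back (t : ℕ → G) (a r : ℕ) :
    desc t a (r + 1) = desc t a r * t (a - r) := by
  simp [desc, List.range_succ]

lemma desc_succ_front (t : ℕ → G) (a r : ℕ) :
    desc t a (r + 1) = t a * desc t (a - 1) r := by
  have h : List.map ((fun i => t (a - i)) ∘ Nat.succ) (List.range r)
      = List.map (fun i => t (a - 1 - i)) (List.range r) := by
    apply List.map_congr_left
    intro i _
    simp only [Function.comp_apply]
    congr 1
    omega
  simp only [desc, List.range_succ_eq_map, List.map_cons, List.map_map, List.prod_cons,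
    Nat.sub_zero, h]

lemma P_split (t : ℕ → G) (a n : ℕ) (h : a ≤ n) :
    P t n = P t a * ((List.range (n - a)).map (fun l => t (a + l + 1))).prod := by
  obtain ⟨b, rfl⟩ := Nat.exists_eq_add_of_le h
  rw [Nat.add_sub_cancel_left]
  unfold P
  rw [List.range_add, List.map_append, List.prod_append, List.map_map]
  congr 1

/-- reassociation helpers -/
lemma sw2 {a b c d : G} (h : a * b = c * d) (e : G) :
    a * (b * e) = c * (d * e) := by rw [← mul_assoc, h, mul_assoc]

lemma sw3 {a b c d e f : G} (h : a * b * c = d * e * f) (g : G) :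
    a * (b * (c * g)) = d * (e * (f * g)) := by
  rw [← mul_assoc, ← mul_assoc, h, mul_assoc, mul_assoc]

section Relations

variable (m : ℕ) (t : ℕ → G)
variable (hbraid : ∀ i, 1 ≤ i → i + 1 ≤ m →
      t i * t (i + 1) * t i = t (i + 1) * t i * t (i + 1))
variable (hcomm : ∀ i j, 1 ≤ i → j ≤ m → i + 2 ≤ j → t i * t j = t j * t i)

include hcomm in
lemma t_mul_P {j n : ℕ} (h1 : n + 2 ≤ j) (h2 : j ≤ m) :
    t j * P t n = P t n * t j := by
  have : Commute (t j) (P t n) := by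
    apply Commute.list_prod_right
    intro y hy
    simp only [List.mem_map, List.mem_range] at hy
    obtain ⟨i, hi, rfl⟩ := hy
    exact (hcomm (i + 1) j (by omega) h2 (by omega)).symm
  exact this

include hcomm in
lemma t_mul_desc {j a r : ℕ} (h1 : a + 2 ≤ j) (h2 : j ≤ m) (h3 : r ≤ a) :
    t j * desc t a r = desc t a r * t j := by
  have : Commute (t j) (desc t a r) := by
    apply Commute.list_prod_right
    intro y hy
    simp only [List.mem_map, List.mem_range] at hy
    obtain ⟨i, hi, rfl⟩ := hy
    exact (hcomm (a - i) j (by omega) h2 (by omega)).symm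
  exact this

include hbraid hcomm in
lemma P_mul_t {n i : ℕ} (h1 : 1 ≤ i) (h2 : i + 1 ≤ n) (h3 : n ≤ m) :
    P t n * t i = t (i + 1) * P t n := by
  set Q := ((List.range (n - (i + 1))).map (fun l => t (i + 1 + l + 1))).prod with hQ
  have hsplit : P t n = P t (i + 1) * Q := P_split t (i + 1) n h2
  have hQcomm : t i * Q = Q * t i := by
    have : Commute (t i) Q := by
      apply Commute.list_prod_right
      intro y hy
      simp only [hQ, List.mem_map, List.mem_range] at hy
      obtain ⟨l, hl, rfl⟩ := hy
      exact hcomm i (i + 1 + l + 1) h1 (by omega) (by omega)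
    exact this
  have hPi1 : P t (i + 1) = P t (i - 1) * t i * t (i + 1) := by
    have e1 : i + 1 = (i - 1) + 1 + 1 := by omega
    have e2 : (i - 1) + 1 = i := by omega
    rw [e1, P_succ, P_succ, e2]
  have hti1 : t (i + 1) * P t (i - 1) = P t (i - 1) * t (i + 1) :=
    t_mul_P m t hcomm (by omega) (by omega)
  calc P t n * t i = P t (i + 1) * Q * t i := by rw [hsplit]
    _ = P t (i + 1) * (t i * Q) := by rw [mul_assoc, hQcomm]
    _ = P t (i - 1) * (t i * t (i + 1) * t i) * Q := by
        rw [hPi1]; group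
    _ = P t (i - 1) * (t (i + 1) * t i * t (i + 1)) * Q := by
        rw [hbraid i h1 (by omega)]
    _ = t (i + 1) * P t (i - 1) * (t i * t (i + 1)) * Q := by
        rw [← mul_assoc, ← mul_assoc, mul_assoc (P t (i-1)), ← mul_assoc (P t (i-1)),
          ← hti1]
        group
    _ = t (i + 1) * (P t (i + 1) * Q) := by rw [hPi1]; group
    _ = t (i + 1) * P t n := by rw [hsplit]

include hbraid hcomm in
lemma desc_mul_P {n a : ℕ} (hn : n ≤ m) (ha : a ≤ n) :
    ∀ r, r + 1 ≤ a → desc t a r * P t n = P t n * desc t (a - 1) r := by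
  intro r
  induction r with
  | zero => intro _; simp [desc_zero]
  | succ r ih =>
      intro hr
      have h1 : t (a - r) * P t n = P t n * t (a - r - 1) := by
        have := P_mul_t m t hbraid hcomm (i := a - r - 1) (by omega) (by omega) hn
        have e : a - r - 1 + 1 = a - r := by omega
        rw [e] at this
        exact this.symm
      have e2 : a - 1 - r = a - r - 1 := by omega
      calc desc t a (r + 1) * P t n
          = desc t a r * (t (a - r) * P t n) := by rw [desc_succ_back]; group
        _ = desc t a r * P t n * t (a - r - 1) := by rw [h1]; group
        _ = P t n * desc t (a - 1) r * t (a - r - 1) := by rw [ih (by omega)]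
        _ = P t n * desc t (a - 1) (r + 1) := by rw [desc_succ_back, e2]; group

include hbraid hcomm in
lemma inner {n : ℕ} (hn : n + 1 ≤ m) :
    ∀ r, r + 1 ≤ n + 1 →
      (P t n * t (n + 1)) ^ (r + 1) = P t n ^ (r + 1) * desc t (n + 1) (r + 1) := by
  intro r
  induction r with
  | zero => intro _; simp [desc_one]
  | succ r ih =>
      intro hr
      have hrn : r + 1 ≤ n := by omega
      have hn1 : 1 ≤ n := by omega
      have hfront : desc t (n + 1) (r + 1) = t (n + 1) * desc t n r := by
        rw [desc_succ_front]; simp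
      have hmove : desc t n r * P t n = P t n * desc t (n - 1) r :=
        desc_mul_P m t hbraid hcomm (by omega) le_rfl r (by omega)
      have hPn : P t n = P t (n - 1) * t n := by
        have e : n = (n - 1) + 1 := by omega
        rw [e, P_succ, ← e]
      have htop : t (n + 1) * P t (n - 1) = P t (n - 1) * t (n + 1) :=
        t_mul_P m t hcomm (by omega) hn
      have hdcomm : t (n + 1) * desc t (n - 1) r = desc t (n - 1) r * t (n + 1) :=
        t_mul_desc m t hcomm (by omega) hn (by omega)
      have hbr := hbraid n hn1 hn
      have hfront2 : desc t n (r + 1) = t n * desc t (n - 1) r := desc_succ_front t n r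
      have key : desc t (n + 1) (r + 1) * (P t n * t (n + 1))
          = P t n * desc t (n + 1) (r + 2) := by
        calc desc t (n + 1) (r + 1) * (P t n * t (n + 1))
            = t (n + 1) * (desc t n r * P t n) * t (n + 1) := by rw [hfront]; group
          _ = t (n + 1) * P t n * (desc t (n - 1) r * t (n + 1)) := by rw [hmove]; group
          _ = t (n + 1) * P t n * (t (n + 1) * desc t (n - 1) r) := by rw [hdcomm]
          _ = P t (n - 1) * (t (n + 1) * t n * t (n + 1)) * desc t (n - 1) r := by
              rw [hPn, show t (n + 1) * (P t (n - 1) * t n)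
                  = P t (n - 1) * (t (n + 1) * t n) from by
                rw [← mul_assoc, htop, mul_assoc]]
              group
          _ = P t (n - 1) * (t n * t (n + 1) * t n) * desc t (n - 1) r := by rw [← hbr]
          _ = P t (n - 1) * t n * (t (n + 1) * (t n * desc t (n - 1) r)) := by group
          _ = P t n * (t (n + 1) * desc t n (r + 1)) := by rw [← hPn, ← hfront2]
          _ = P t n * desc t (n + 1) (r + 2) := by
              rw [desc_succ_front t (n + 1) (r + 1)]; simp
      calc (P t n * t (n + 1)) ^ (r + 1 + 1)
          = (P t n * t (n + 1)) ^ (r + 1) * (P t n * t (n + 1)) := pow_succ _ _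
        _ = P t n ^ (r + 1) * (desc t (n + 1) (r + 1) * (P t n * t (n + 1))) := by
            rw [ih (by omega)]; group
        _ = P t n ^ (r + 1) * (P t n * desc t (n + 1) (r + 2)) := by rw [key]
        _ = P t n ^ (r + 1 + 1) * desc t (n + 1) (r + 1 + 1) := by
            rw [pow_succ]; group

include hbraid hcomm in
lemma main (k : ℕ) (hk1 : 1 ≤ k) :
    ∀ n, k ≤ n → n ≤ m →
      P t n ^ (k + 1)
        = P t k ^ (k + 1)
          * ((List.range (n - k)).map (fun l => desc t (k + 1 + l) (k + 1))).prod := by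
  intro n
  induction n with
  | zero => intro h1 _; omega
  | succ n ih =>
      intro h1 h2
      rcases Nat.lt_or_ge k (n + 1) with hlt | hge
      · have hkn : k ≤ n := by omega
        have e1 : n + 1 - k = (n - k) + 1 := by omega
        have e2 : k + 1 + (n - k) = n + 1 := by omega
        have hinner := inner m t hbraid hcomm (n := n) h2 k (by omega)
        calc P t (n + 1) ^ (k + 1)
            = (P t n * t (n + 1)) ^ (k + 1) := by rw [P_succ]
          _ = P t n ^ (k + 1) * desc t (n + 1) (k + 1) := hinner
          _ = P t k ^ (k + 1)
              * ((List.range (n - k)).map (fun l => desc t (k + 1 + l) (k + 1))).prod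
              * desc t (n + 1) (k + 1) := by rw [ih hkn (by omega)]
          _ = P t k ^ (k + 1)
              * ((List.range (n + 1 - k)).map (fun l => desc t (k + 1 + l) (k + 1))).prod := by
              rw [e1, List.range_succ, List.map_append, List.prod_append]
              simp [e2, mul_assoc]
      · have : k = n + 1 := by omega
        subst this
        simp

end Relations

end ChainPowerAux

/-- Let `G` be a group and `t 1, …, t m` elements of `G` satisfying the
chain relations (braid relations for adjacent indices, commutation for indices at distance
at least 2). Then for every `k` with `1 ≤ k ≤ m - 1`,
`(t 1 ⋯ t m)^(k+1) = (t 1 ⋯ t k)^(k+1) * (t (k+1) ⋯ t 1) * (t (k+2) ⋯ t 2) ⋯ (t m ⋯ t (m-k))`,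
where each trailing factor is the descending product `t j * t (j-1) * ⋯ * t (j-k)` for
`j = k+1, …, m`. -/
theorem chain_power_decomposition {G : Type*} [Group G] (m : ℕ) (t : ℕ → G)
    (hbraid : ∀ i, 1 ≤ i → i + 1 ≤ m →
      t i * t (i + 1) * t i = t (i + 1) * t i * t (i + 1))
    (hcomm : ∀ i j, 1 ≤ i → j ≤ m → i + 2 ≤ j → t i * t j = t j * t i)
    (k : ℕ) (hk1 : 1 ≤ k) (hk2 : k ≤ m - 1) :
    (((List.range m).map (fun i => t (i + 1))).prod) ^ (k + 1)
      = (((List.range k).map (fun i => t (i + 1))).prod) ^ (k + 1)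
        * (((List.range (m - k)).map (fun l =>
            (((List.range (k + 1)).map (fun i => t (k + 1 + l - i))).prod))).prod) := by
  exact ChainPowerAux.main m t hbraid hcomm k hk1 m (by omega) le_rfl
end

section
/- Let G be a group and let t_1, t_2, t_3, t_4 be elements of G satisfying the chain relations. Then (t_1 t_2 t_3 t_4)^2 = (t_1 t_1 t_2 t_3) · (t_1 t_2 t_4 t_3). -/
/-- Let `G` be a group and `t 1, t 2, t 3, t 4 ∈ G` satisfy the chain
relations. Then `(t 1 * t 2 * t 3 * t 4)^2 = (t 1 * t 1 * t 2 * t 3) * (t 1 * t 2 * t 4 * t 3)`. -/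
theorem chain4_star_rearrangement {G : Type*} [Group G] (t : ℕ → G)
    (hbraid : ∀ i, 1 ≤ i → i + 1 ≤ 4 →
      t i * t (i + 1) * t i = t (i + 1) * t i * t (i + 1))
    (hcomm : ∀ i j, 1 ≤ i → j ≤ 4 → i + 2 ≤ j → t i * t j = t j * t i) :
    (t 1 * t 2 * t 3 * t 4) ^ 2 = (t 1 * t 1 * t 2 * t 3) * (t 1 * t 2 * t 4 * t 3) := by
  set a := t 1; set b := t 2; set c := t 3; set d := t 4
  have h12 : a * b * a = b * a * b := hbraid 1 (by norm_num) (by norm_num)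
  have h23 : b * c * b = c * b * c := hbraid 2 (by norm_num) (by norm_num)
  have h34 : c * d * c = d * c * d := hbraid 3 (by norm_num) (by norm_num)
  have h13 : a * c = c * a := hcomm 1 3 (by norm_num) (by norm_num) (by norm_num)
  have h14 : a * d = d * a := hcomm 1 4 (by norm_num) (by norm_num) (by norm_num)
  have h24 : b * d = d * b := hcomm 2 4 (by norm_num) (by norm_num) (by norm_num)
  have sw : ∀ u v : G, u * v = v * u → ∀ x : G, u * (v * x) = v * (u * x) := by
    intro u v h x; rw [← mul_assoc, h, mul_assoc]
  have br : ∀ u v : G, u * v * u = v * u * v → ∀ x : G,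
      u * (v * (u * x)) = v * (u * (v * x)) := by
    intro u v h x; rw [← mul_assoc, ← mul_assoc, h, mul_assoc, mul_assoc]
  have e34 : d * (c * d) = c * (d * c) := by rw [← mul_assoc, ← h34, mul_assoc]
  simp only [pow_two, mul_assoc]
  rw [sw d a h14.symm, sw d b h24.symm, e34, sw c a h13.symm,
    ← br b c h23, br b a h12.symm, sw a c h13, ]
end

section
/- Let G be a group and let t_1, t_2, t_3, t_4 be elements of G satisfying the chain relations. Then (t_1 t_2 t_3 t_4)^2 = (t_1 t_2)^2 · (t_3 t_2) · (t_4 t_3). -/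
/-- Let `G` be a group and `t 1, t 2, t 3, t 4 ∈ G` satisfy the chain
relations. Then `(t 1 * t 2 * t 3 * t 4)^2 = (t 1 * t 2)^2 * (t 3 * t 2) * (t 4 * t 3)`. -/
theorem chain4_chain_rearrangement {G : Type*} [Group G] (t : ℕ → G)
    (hbraid : ∀ i, 1 ≤ i → i + 1 ≤ 4 →
      t i * t (i + 1) * t i = t (i + 1) * t i * t (i + 1))
    (hcomm : ∀ i j, 1 ≤ i → j ≤ 4 → i + 2 ≤ j → t i * t j = t j * t i) :
    (t 1 * t 2 * t 3 * t 4) ^ 2 = (t 1 * t 2) ^ 2 * (t 3 * t 2) * (t 4 * t 3) := by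
  have h23 := hbraid 2 (by norm_num) (by norm_num)
  have h34 := hbraid 3 (by norm_num) (by norm_num)
  have c13 := hcomm 1 3 (by norm_num) (by norm_num) (by norm_num)
  have c14 := hcomm 1 4 (by norm_num) (by norm_num) (by norm_num)
  have c24 := hcomm 2 4 (by norm_num) (by norm_num) (by norm_num)
  norm_num at h23 h34
  have c13' : ∀ x : G, t 3 * (t 1 * x) = t 1 * (t 3 * x) := fun x => by
    rw [← mul_assoc, ← c13, mul_assoc]
  have c14' : ∀ x : G, t 4 * (t 1 * x) = t 1 * (t 4 * x) := fun x => by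
    rw [← mul_assoc, ← c14, mul_assoc]
  have c24' : ∀ x : G, t 4 * (t 2 * x) = t 2 * (t 4 * x) := fun x => by
    rw [← mul_assoc, ← c24, mul_assoc]
  have h34' : ∀ x : G, t 4 * (t 3 * (t 4 * x)) = t 3 * (t 4 * (t 3 * x)) := fun x => by
    rw [← mul_assoc, ← mul_assoc, ← h34, mul_assoc, mul_assoc]
  have h23' : ∀ x : G, t 3 * (t 2 * (t 3 * x)) = t 2 * (t 3 * (t 2 * x)) := fun x => by
    rw [← mul_assoc, ← mul_assoc, ← h23, mul_assoc, mul_assoc]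
  simp only [pow_two, mul_assoc]
  have h34'' : t 4 * (t 3 * t 4) = t 3 * (t 4 * t 3) := by
    rw [← mul_assoc, ← mul_assoc, ← h34]
  rw [c14', c13', c24', h34'', h23']
end

section
/- Let G be a group and let t_1, t_2, t_3, t_4, t_5 be elements of G satisfying the chain relations. Then (t_1 t_2 t_3 t_4 t_5)^2 = (t_1 t_2)^2 · (t_2^{-1} t_3 t_2) · (t_4 t_3 t_4^{-1}) · (t_4 t_5)^2. -/
/-- Let `G` be a group and `t 1, …, t 5 ∈ G` satisfy the chain relations.
Then `(t 1 * t 2 * t 3 * t 4 * t 5)^2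
  = (t 1 * t 2)^2 * (t 2⁻¹ * t 3 * t 2) * (t 4 * t 3 * t 4⁻¹) * (t 4 * t 5)^2`. -/
theorem chain5_square_rearrangement {G : Type*} [Group G] (t : ℕ → G)
    (hbraid : ∀ i, 1 ≤ i → i + 1 ≤ 5 →
      t i * t (i + 1) * t i = t (i + 1) * t i * t (i + 1))
    (hcomm : ∀ i j, 1 ≤ i → j ≤ 5 → i + 2 ≤ j → t i * t j = t j * t i) :
    (t 1 * t 2 * t 3 * t 4 * t 5) ^ 2
      = (t 1 * t 2) ^ 2 * ((t 2)⁻¹ * t 3 * t 2) * (t 4 * t 3 * (t 4)⁻¹) * (t 4 * t 5) ^ 2 := by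
  have swap : ∀ {x y : G}, x * y = y * x → ∀ z : G, x * (y * z) = y * (x * z) := by
    intro x y h z; rw [← mul_assoc, h, mul_assoc]
  have s13 := swap (hcomm 1 3 (by norm_num) (by norm_num) (by norm_num))
  have s14 := swap (hcomm 1 4 (by norm_num) (by norm_num) (by norm_num))
  have s15 := swap (hcomm 1 5 (by norm_num) (by norm_num) (by norm_num))
  have s24 := swap (hcomm 2 4 (by norm_num) (by norm_num) (by norm_num))
  have s25 := swap (hcomm 2 5 (by norm_num) (by norm_num) (by norm_num))
  have s35 := swap (hcomm 3 5 (by norm_num) (by norm_num) (by norm_num))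
  simp only [pow_two, mul_assoc, mul_inv_cancel_left, inv_mul_cancel_left]
  rw [← s15, ← s14, ← s13, ← s25, ← s24, ← s35]
end

section
/- Let G be a group and let t_1, t_2, t_3, t_4, t_5, t_6 be elements of G satisfying the chain relations. Then (t_1 t_2 t_3 t_4 t_5 t_6)^2 = (t_1 t_2)^2 · (t_2^{-1} t_3 t_2) · (t_4 t_3) · (t_5 t_4) · (t_6 t_5) · t_6. -/
/-- Let `G` be a group and `t 1, …, t 6 ∈ G` satisfy the chain relations.
Then `(t 1 * t 2 * t 3 * t 4 * t 5 * t 6)^2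
  = (t 1 * t 2)^2 * (t 2⁻¹ * t 3 * t 2) * (t 4 * t 3) * (t 5 * t 4) * (t 6 * t 5) * t 6`. -/
theorem chain6_square_rearrangement {G : Type*} [Group G] (t : ℕ → G)
    (hbraid : ∀ i, 1 ≤ i → i + 1 ≤ 6 →
      t i * t (i + 1) * t i = t (i + 1) * t i * t (i + 1))
    (hcomm : ∀ i j, 1 ≤ i → j ≤ 6 → i + 2 ≤ j → t i * t j = t j * t i) :
    (t 1 * t 2 * t 3 * t 4 * t 5 * t 6) ^ 2
      = (t 1 * t 2) ^ 2 * ((t 2)⁻¹ * t 3 * t 2) * (t 4 * t 3) * (t 5 * t 4) * (t 6 * t 5)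
        * t 6 := by
  have sw : ∀ x y z : G, x * y = y * x → x * (y * z) = y * (x * z) := by
    intro x y z h; rw [← mul_assoc, h, mul_assoc]
  have h13 := hcomm 1 3 (by norm_num) (by norm_num) (by norm_num)
  have h14 := hcomm 1 4 (by norm_num) (by norm_num) (by norm_num)
  have h15 := hcomm 1 5 (by norm_num) (by norm_num) (by norm_num)
  have h16 := hcomm 1 6 (by norm_num) (by norm_num) (by norm_num)
  have h24 := hcomm 2 4 (by norm_num) (by norm_num) (by norm_num)
  have h25 := hcomm 2 5 (by norm_num) (by norm_num) (by norm_num)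
  have h26 := hcomm 2 6 (by norm_num) (by norm_num) (by norm_num)
  have h35 := hcomm 3 5 (by norm_num) (by norm_num) (by norm_num)
  have h36 := hcomm 3 6 (by norm_num) (by norm_num) (by norm_num)
  have h46 := hcomm 4 6 (by norm_num) (by norm_num) (by norm_num)
  simp only [pow_two, mul_assoc, mul_inv_cancel_left]
  rw [sw _ _ _ h16.symm, sw _ _ _ h15.symm, sw _ _ _ h14.symm, sw _ _ _ h13.symm,
    sw _ _ _ h26.symm, sw _ _ _ h25.symm, sw _ _ _ h24.symm,
    sw _ _ _ h36.symm, sw _ _ _ h35.symm, sw _ _ _ h46.symm]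
end

section
/- Let G be a group and let t_1, t_2, t_3, t_4, t_5, t_6, t_7 be elements of G satisfying the chain relations. Then (t_1 t_2 t_3 t_4 t_5 t_6 t_7)^2 = (t_1 t_2)^2 · (t_2^{-1} t_3 t_2) · (t_4 t_3) · (t_5 t_4) · (t_6 t_5) · t_6^{-1} · (t_6 t_7)^2. -/
private lemma swap_aux {G : Type*} [Group G] {a b : G} (h : a * b = b * a) (c : G) :
    a * (b * c) = b * (a * c) := by rw [← mul_assoc, h, mul_assoc]

/-- Let `G` be a group and `t 1, …, t 7 ∈ G` satisfy the chain relations.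
Then `(t 1 * ⋯ * t 7)^2 = (t 1 * t 2)^2 * (t 2⁻¹ * t 3 * t 2) * (t 4 * t 3) * (t 5 * t 4)
  * (t 6 * t 5) * t 6⁻¹ * (t 6 * t 7)^2`. -/
theorem chain7_square_rearrangement {G : Type*} [Group G] (t : ℕ → G)
    (hbraid : ∀ i, 1 ≤ i → i + 1 ≤ 7 →
      t i * t (i + 1) * t i = t (i + 1) * t i * t (i + 1))
    (hcomm : ∀ i j, 1 ≤ i → j ≤ 7 → i + 2 ≤ j → t i * t j = t j * t i) :
    (t 1 * t 2 * t 3 * t 4 * t 5 * t 6 * t 7) ^ 2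
      = (t 1 * t 2) ^ 2 * ((t 2)⁻¹ * t 3 * t 2) * (t 4 * t 3) * (t 5 * t 4) * (t 6 * t 5)
        * (t 6)⁻¹ * (t 6 * t 7) ^ 2 := by
  have h13 := hcomm 1 3 (by norm_num) (by norm_num) (by norm_num)
  have h14 := hcomm 1 4 (by norm_num) (by norm_num) (by norm_num)
  have h15 := hcomm 1 5 (by norm_num) (by norm_num) (by norm_num)
  have h16 := hcomm 1 6 (by norm_num) (by norm_num) (by norm_num)
  have h17 := hcomm 1 7 (by norm_num) (by norm_num) (by norm_num)
  have h24 := hcomm 2 4 (by norm_num) (by norm_num) (by norm_num)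
  have h25 := hcomm 2 5 (by norm_num) (by norm_num) (by norm_num)
  have h26 := hcomm 2 6 (by norm_num) (by norm_num) (by norm_num)
  have h27 := hcomm 2 7 (by norm_num) (by norm_num) (by norm_num)
  have h35 := hcomm 3 5 (by norm_num) (by norm_num) (by norm_num)
  have h36 := hcomm 3 6 (by norm_num) (by norm_num) (by norm_num)
  have h37 := hcomm 3 7 (by norm_num) (by norm_num) (by norm_num)
  have h46 := hcomm 4 6 (by norm_num) (by norm_num) (by norm_num)
  have h47 := hcomm 4 7 (by norm_num) (by norm_num) (by norm_num)
  have h57 := hcomm 5 7 (by norm_num) (by norm_num) (by norm_num)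
  simp only [pow_two, mul_assoc, inv_mul_cancel_left, mul_inv_cancel_left]
  -- move the second t 1 leftwards
  rw [swap_aux h17.symm, swap_aux h16.symm, swap_aux h15.symm, swap_aux h14.symm,
    swap_aux h13.symm,
    -- move the second t 2 leftwards
    swap_aux h27.symm, swap_aux h26.symm, swap_aux h25.symm, swap_aux h24.symm,
    -- move the second t 3 leftwards
    swap_aux h37.symm, swap_aux h36.symm, swap_aux h35.symm,
    -- move the second t 4 leftwards
    swap_aux h47.symm, swap_aux h46.symm,
    -- move the second t 5 leftwards
    swap_aux h57.symm,
    -- on the RHS: swap t 1 and t 3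
    swap_aux h13]
end

section
/- Let G be a group, let g ≥ 1, and let t_1, …, t_{2g+1} be elements of G such that t_i t_j = t_j t_i whenever |i−j| ≥ 2. Then there exist elements w_1, …, w_{2g+2} of G, each of which is conjugate in G to t_{g+1}, such that (t_1 t_2 ⋯ t_{2g+1})^{2g+2} = (t_1 t_2 ⋯ t_g)^{2g+2} · (t_{g+2} t_{g+3} ⋯ t_{2g+1})^{2g+2} · w_1 w_2 ⋯ w_{2g+2}. -/
private lemma aux_pow_mul_eq {G : Type*} [Group G] (x d : G) :
    ∀ n : ℕ, (x * d) ^ n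
      = x ^ n * ((List.range n).map
          (fun i => (x ^ (n - 1 - i))⁻¹ * d * x ^ (n - 1 - i))).prod := by
  intro n
  induction n with
  | zero => simp
  | succ n ih =>
      rw [List.range_succ_eq_map]
      simp only [List.map_cons, List.map_map, List.prod_cons]
      have hfun : ((fun i => (x ^ (n + 1 - 1 - i))⁻¹ * d * x ^ (n + 1 - 1 - i)) ∘ Nat.succ)
          = fun i => (x ^ (n - 1 - i))⁻¹ * d * x ^ (n - 1 - i) := by
        funext i
        have h2 : n + 1 - 1 - (i + 1) = n - 1 - i := by omega
        show (x ^ (n + 1 - 1 - (i + 1)))⁻¹ * d * x ^ (n + 1 - 1 - (i + 1)) = _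
        rw [h2]
      rw [hfun]
      have h0 : n + 1 - 1 - 0 = n := by omega
      rw [h0, pow_succ' (x * d), ih, pow_succ' x]
      group

/-- Let `G` be a group, `g ≥ 1`, and `t 1, …, t (2g+1)` elements of `G`
commuting whenever their indices differ by at least 2. Then there exist elements
`w 1, …, w (2g+2)` of `G`, each conjugate in `G` to `t (g+1)`, such that
`(t 1 ⋯ t (2g+1))^(2g+2) = (t 1 ⋯ t g)^(2g+2) * (t (g+2) ⋯ t (2g+1))^(2g+2) * w 1 ⋯ w (2g+2)`. -/
theorem hyperelliptic_word_block_decomposition {G : Type*} [Group G] (g : ℕ) (hg : 1 ≤ g)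
    (t : ℕ → G)
    (hcomm : ∀ i j, 1 ≤ i → j ≤ 2 * g + 1 → i + 2 ≤ j → t i * t j = t j * t i) :
    ∃ w : ℕ → G, (∀ i < 2 * g + 2, IsConj (t (g + 1)) (w i)) ∧
      (((List.range (2 * g + 1)).map (fun i => t (i + 1))).prod) ^ (2 * g + 2)
        = (((List.range g).map (fun i => t (i + 1))).prod) ^ (2 * g + 2)
          * (((List.range g).map (fun i => t (g + 2 + i))).prod) ^ (2 * g + 2)
          * (((List.range (2 * g + 2)).map w).prod) := by
  set A : G := ((List.range g).map (fun i => t (i + 1))).prod with hA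
  set B : G := ((List.range g).map (fun i => t (g + 2 + i))).prod with hB
  set c : G := t (g + 1) with hc
  set d : G := B⁻¹ * c * B with hd
  set x : G := A * B with hx
  -- A and B commute
  have hAB : Commute A B := by
    apply Commute.list_prod_right
    intro y hy
    simp only [List.mem_map, List.mem_range] at hy
    obtain ⟨j, hj, rfl⟩ := hy
    apply Commute.list_prod_left
    intro z hz
    simp only [List.mem_map, List.mem_range] at hz
    obtain ⟨i, hi, rfl⟩ := hz
    exact hcomm (i + 1) (g + 2 + j) (by omega) (by omega) (by omega)
  -- full product equals A * c * B
  have hP : ((List.range (2 * g + 1)).map (fun i => t (i + 1))).prod = A * c * B := by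
    have h1 : 2 * g + 1 = g + (g + 1) := by omega
    rw [h1, List.range_add, List.map_append, List.prod_append, List.range_succ_eq_map]
    simp only [List.map_cons, List.map_map, List.prod_cons]
    have h2 : (List.map ((fun i => t (i + 1)) ∘ (fun x => g + x) ∘ Nat.succ) (List.range g))
        = List.map (fun i => t (g + 2 + i)) (List.range g) := by
      apply List.map_congr_left
      intro i _
      show t (g + (i + 1) + 1) = t (g + 2 + i)
      congr 1
      omega
    have h3 : g + 0 + 1 = g + 1 := by omega
    rw [h2, h3, hA, hB, hc, mul_assoc]
  have hxd : A * c * B = x * d := by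
    rw [hx, hd]; group
  refine ⟨fun i => (x ^ (2 * g + 1 - i))⁻¹ * d * x ^ (2 * g + 1 - i), ?_, ?_⟩
  · intro i _
    rw [isConj_iff]
    refine ⟨(B * x ^ (2 * g + 1 - i))⁻¹, ?_⟩
    rw [hd]; group
  · rw [hP, hxd, aux_pow_mul_eq x d (2 * g + 2), ← hAB.mul_pow]
    have h4 : List.map (fun i => (x ^ (2 * g + 2 - 1 - i))⁻¹ * d * x ^ (2 * g + 2 - 1 - i))
          (List.range (2 * g + 2))
        = List.map (fun i => (x ^ (2 * g + 1 - i))⁻¹ * d * x ^ (2 * g + 1 - i))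
          (List.range (2 * g + 2)) := by
      apply List.map_congr_left
      intro i hi
      have h5 : 2 * g + 2 - 1 - i = 2 * g + 1 - i := by omega
      rw [h5]
    rw [h4]
end
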